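/- Suppose F: [0,T] → ℝ^n is differentiable with nonnegative entries, and |d/dt F_i(t)| ≤ J Σ_j (A_{ij} + d_G δ_{ij}) F_j(t) for a nonnegative symmetric matrix A with row sums at most d_G and a constant J ≥ 0. Then F_i(t) ≤ e^{J d_G t} Σ_j [e^{J A t}]_{ij} F_j(0) for all t ∈ [0,T]. -/

import Mathlib

/-!
Put `M = J (A + d_G I)`, so that the hypothesis gives `F' ≤ M F` entrywise. Since `A ≥ 0`, the
matrices `exp(s M) = e^{J d_G s} exp(J s A)` have nonnegative entries for `s ≥ 0`, hence
`w(s) = exp((t - s) M) F(s)` has derivative `exp((t - s) M) (F'(s) - M F(s)) ≤ 0` and is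
antitone on `[0, t]`; comparing `w(t) = F(t)` with `w(0) = exp(t M) F(0)` gives the claim.
-/

open Finset Matrix NormedSpace

variable {ι : Type*} [Fintype ι] [DecidableEq ι]

namespace Matrix

section LinftyOpNorm

attribute [local instance] Matrix.linftyOpNormedRing Matrix.linftyOpNormedAlgebra

theorem exp_apply_nonneg {B : Matrix ι ι ℝ} (hB : ∀ i j, 0 ≤ B i j) (i j : ι) :
    0 ≤ exp B i j := by
  have hsum := (expSeries_summable' (𝕂 := ℝ) B).hasSum.map (entryLinearMap ℝ ℝ i j)
    (continuous_id.matrix_elem i j)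
  rw [congrFun (exp_eq_tsum ℝ) B]
  exact hsum.nonneg fun k => mul_nonneg (by positivity) (pow_apply_nonneg hB k i j)

theorem hasDerivAt_exp_sub_smul (M : Matrix ι ι ℝ) (t s : ℝ) :
    HasDerivAt (fun s => exp ((t - s) • M)) (-(M * exp ((t - s) • M))) s := by
  have h := (hasDerivAt_exp_smul_const' (𝕂 := ℝ) M (t - s)).scomp s
    ((hasDerivAt_id s).const_sub t)
  rw [neg_one_smul] at h
  exact h

end LinftyOpNorm

theorem exp_add_smul_one (X : Matrix ι ι ℝ) (r : ℝ) :
    exp (X + r • (1 : Matrix ι ι ℝ)) = Real.exp r • exp X := by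
  rw [exp_add_of_commute _ _ ((Commute.one_right X).smul_right r), smul_one_eq_diagonal,
    exp_diagonal, Pi.exp_def, ← Real.exp_eq_exp_ℝ, ← smul_one_eq_diagonal, mul_smul_one]

omit [DecidableEq ι] in
theorem mulVec_le_mulVec_of_nonneg {E : Matrix ι ι ℝ} (hE : ∀ i j, 0 ≤ E i j) {u v : ι → ℝ}
    (huv : u ≤ v) : E *ᵥ u ≤ E *ᵥ v := fun i =>
  dotProduct_le_dotProduct_of_nonneg_left huv (hE i)

end Matrix

omit [DecidableEq ι] in
theorem HasDerivAt.mulVec {E : ℝ → Matrix ι ι ℝ} {E' : Matrix ι ι ℝ} {v : ℝ → ι → ℝ}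
    {v' : ι → ℝ} {s : ℝ} (hE : HasDerivAt E E' s) (hv : HasDerivAt v v' s) :
    HasDerivAt (fun s => E s *ᵥ v s) (E' *ᵥ v s + E s *ᵥ v') s := by
  refine hasDerivAt_pi.2 fun i => ?_
  have hEi : ∀ j, HasDerivAt (fun s => E s i j) (E' i j) s := fun j =>
    hasDerivAt_pi.1 (hasDerivAt_pi.1 hE i) j
  have h := HasDerivAt.fun_sum (u := univ) fun j _ => (hEi j).fun_mul (hasDerivAt_pi.1 hv j)
  rw [sum_add_distrib] at h
  exact h

theorem le_exp_smul_mulVec_of_hasDerivAt_le {M : Matrix ι ι ℝ}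
    (hM : ∀ s : ℝ, 0 ≤ s → ∀ i j, 0 ≤ exp (s • M) i j) {F F' : ℝ → ι → ℝ} {t : ℝ} (ht : 0 ≤ t)
    (hF : ∀ s ∈ Set.Icc 0 t, HasDerivAt F (F' s) s) (hF' : ∀ s ∈ Set.Icc 0 t, F' s ≤ M *ᵥ F s) :
    F t ≤ exp (t • M) *ᵥ F 0 := by
  set w := fun s => exp ((t - s) • M) *ᵥ F s
  have hw : ∀ s ∈ Set.Icc 0 t, HasDerivAt w (exp ((t - s) • M) *ᵥ (F' s - M *ᵥ F s)) s := by
    intro s hs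
    convert (hasDerivAt_exp_sub_smul M t s).mulVec (hF s hs) using 1
    rw [mulVec_sub, mulVec_mulVec, ← ((Commute.refl M).smul_right (t - s)).exp_right.eq,
      neg_mulVec]
    abel
  have hw_nonpos : ∀ s ∈ Set.Icc 0 t, exp ((t - s) • M) *ᵥ (F' s - M *ᵥ F s) ≤ 0 := fun s hs =>
    mulVec_zero (exp ((t - s) • M)) ▸
      mulVec_le_mulVec_of_nonneg (hM (t - s) (sub_nonneg.2 hs.2)) (sub_nonpos.2 (hF' s hs))
  intro i
  have hanti : AntitoneOn (fun s => w s i) (Set.Icc 0 t) := by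
    refine antitoneOn_of_hasDerivWithinAt_nonpos (convex_Icc 0 t) (fun s hs => ?_)
      (fun s hs => ?_) (fun s hs => hw_nonpos s (interior_subset hs) i)
    · exact (hasDerivAt_pi.1 (hw s hs) i).continuousAt.continuousWithinAt
    · exact (hasDerivAt_pi.1 (hw s (interior_subset hs)) i).hasDerivWithinAt
  calc F t i = w t i := by simp [w]
    _ ≤ w 0 i := hanti ⟨le_rfl, ht⟩ ⟨ht, le_rfl⟩ ht
    _ = (exp (t • M) *ᵥ F 0) i := by simp [w]

theorem gronwall_matrix_comparison_general {n : ℕ}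
    (T J dG : ℝ) (hJ : 0 ≤ J)
    (A : Matrix (Fin n) (Fin n) ℝ)
    (hApos : ∀ i j, 0 ≤ A i j)
    (F F' : ℝ → Fin n → ℝ)
    (hderiv : ∀ i, ∀ t ∈ Set.Icc (0 : ℝ) T, HasDerivAt (fun τ => F τ i) (F' t i) t)
    (hbound : ∀ t ∈ Set.Icc (0 : ℝ) T, ∀ i,
      |F' t i| ≤ J * ∑ j, (A i j + if i = j then dG else 0) * F t j) :
    ∀ t ∈ Set.Icc (0 : ℝ) T, ∀ i,
      F t i ≤ Real.exp (J * dG * t) * ∑ j, (NormedSpace.exp ((J * t) • A)) i j * F 0 j := by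
  intro t ht i
  have hIcc : Set.Icc 0 t ⊆ Set.Icc 0 T := Set.Icc_subset_Icc_right ht.2
  set M := J • (A + dG • (1 : Matrix (Fin n) (Fin n) ℝ))
  have hexp : ∀ s : ℝ, exp (s • M) = Real.exp (J * dG * s) • exp ((J * s) • A) := fun s => by
    rw [← exp_add_smul_one]
    congr 1
    module
  have hM : ∀ s : ℝ, 0 ≤ s → ∀ k l, 0 ≤ exp (s • M) k l := fun s hs k l => by
    rw [hexp, Matrix.smul_apply, smul_eq_mul]
    exact mul_nonneg (Real.exp_pos _).le
      (exp_apply_nonneg (fun k l => mul_nonneg (mul_nonneg hJ hs) (hApos k l)) k l)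
  have hFM : ∀ s ∈ Set.Icc 0 t, F' s ≤ M *ᵥ F s := fun s hs k =>
    (le_abs_self _).trans ((hbound s (hIcc hs) k).trans_eq (by
      simp only [M, mulVec, dotProduct, Matrix.smul_apply, Matrix.add_apply, one_apply,
        smul_eq_mul, mul_ite, mul_one, mul_zero, mul_sum, mul_assoc]))
  have hF : ∀ s ∈ Set.Icc 0 t, HasDerivAt F (F' s) s := fun s hs =>
    hasDerivAt_pi.2 fun k => hderiv k s (hIcc hs)
  have h := le_exp_smul_mulVec_of_hasDerivAt_le hM ht.1 hF hFM i
  rwa [hexp, smul_mulVec, Pi.smul_apply, smul_eq_mul] at h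

/-- Grönwall-type entrywise comparison. Suppose `F : [0,T] → ℝ^n` is
differentiable (with derivative `F'`) with nonnegative entries, and
`|d/dt F_i(t)| ≤ J Σ_j (A_{ij} + d_G δ_{ij}) F_j(t)` for a nonnegative symmetric matrix `A`
whose row sums are at most `d_G`, and a constant `J ≥ 0`. Then
`F_i(t) ≤ e^{J d_G t} Σ_j [e^{J A t}]_{ij} F_j(0)` for all `t ∈ [0,T]`. -/
theorem gronwall_matrix_comparison {n : ℕ}
    (T J dG : ℝ) (hT : 0 ≤ T) (hJ : 0 ≤ J) (hdG : 0 ≤ dG)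
    (A : Matrix (Fin n) (Fin n) ℝ)
    (hAsymm : A.IsSymm) (hApos : ∀ i j, 0 ≤ A i j)
    (hArow : ∀ i, ∑ j, A i j ≤ dG)
    (F F' : ℝ → Fin n → ℝ)
    (hFpos : ∀ t ∈ Set.Icc (0 : ℝ) T, ∀ i, 0 ≤ F t i)
    (hderiv : ∀ i, ∀ t ∈ Set.Icc (0 : ℝ) T, HasDerivAt (fun τ => F τ i) (F' t i) t)
    (hbound : ∀ t ∈ Set.Icc (0 : ℝ) T, ∀ i,
      |F' t i| ≤ J * ∑ j, (A i j + if i = j then dG else 0) * F t j) :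
    ∀ t ∈ Set.Icc (0 : ℝ) T, ∀ i,
      F t i ≤ Real.exp (J * dG * t) * ∑ j, (NormedSpace.exp ((J * t) • A)) i j * F 0 j :=
  gronwall_matrix_comparison_general T J dG hJ A hApos F F' hderiv hbound
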